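/- Let X, Y, Z₁, Z₂ be independent random variables, each exponentially distributed with rate 1, and let γ_R, γ_D, γ_E > 0 and R > 0 be real numbers. Then the probability that min( log₂((1 + γ_R·X)/(1 + γ_E·Z₁)), log₂((1 + γ_D·Y)/(1 + γ_E·Z₂)) ) < R (equivalently, the probability of the event { (1 + γ_R·X)/(1 + γ_E·Z₁) < 2^R or (1 + γ_D·Y)/(1 + γ_E·Z₂) < 2^R }) equals 1 − exp(−(2^R − 1)/γ_D − (2^R − 1)/γ_R) · (1 + (2^R/γ_D)·γ_E)^{−1} · (1 + (2^R/γ_R)·γ_E)^{−1}. (Secrecy outage probability of Case III, where both hops are wiretapped.) -/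

import Mathlib

/-!
The complement of the outage event says that both hops are secure, i.e. `(X, Z₁)` and `(Y, Z₂)`
lie in fixed planar sets; these pairs use disjoint coordinates, so the probability factorizes.
For one hop with eavesdropper gain `z ≥ 0`, security means `X ≥ (t (1 + γE z) - 1) / γ`, whose
exponential tail is `exp (-(t - 1) / γ) * exp (-(t γE / γ) z)`; averaging over `Z ~ Exp(1)`
is a Laplace transform and contributes the factor `(1 + t γE / γ)⁻¹`.
-/

open MeasureTheory ProbabilityTheory Real Set

section

variable {α β γ δ : Type*} [MeasurableSpace α] [MeasurableSpace β] [MeasurableSpace γ]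
  [MeasurableSpace δ] (μa : Measure α) (μb : Measure β) (μc : Measure γ) (μd : Measure δ)
  [SFinite μa] [SFinite μb] [SFinite μc] [SFinite μd]

theorem measurePreserving_prodRegroup :
    MeasurePreserving (fun p : α × β × γ × δ => ((p.1, p.2.2.1), (p.2.1, p.2.2.2)))
      (μa.prod (μb.prod (μc.prod μd))) ((μa.prod μc).prod (μb.prod μd)) :=
  (measurePreserving_prodAssoc μa μc (μb.prod μd)).symm.comp <|
    (MeasurePreserving.id μa).prod <|
      (measurePreserving_prodAssoc μc μb μd).comp <|
        (Measure.measurePreserving_swap.prod (MeasurePreserving.id μd)).comp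
          (measurePreserving_prodAssoc μb μc μd).symm

theorem prod_prod_prod_apply_pairs {s : Set (α × γ)} {t : Set (β × δ)}
    (hs : MeasurableSet s) (ht : MeasurableSet t) :
    μa.prod (μb.prod (μc.prod μd)) {p | (p.1, p.2.2.1) ∈ s ∧ (p.2.1, p.2.2.2) ∈ t}
      = (μa.prod μc) s * (μb.prod μd) t := by
  rw [← Measure.prod_prod]
  exact (measurePreserving_prodRegroup μa μb μc μd).measure_preimage (hs.prod ht).nullMeasurableSet

end

theorem ae_nonneg_expMeasure (r : ℝ) : ∀ᵐ x ∂expMeasure r, 0 ≤ x := by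
  refine (ae_withDensity_iff (measurable_exponentialPDFReal r).ennreal_ofReal).2 ?_
  filter_upwards with x hx
  by_contra hneg
  exact hx (exponentialPDF_of_neg (not_le.mp hneg))

theorem expMeasure_Ici {r a : ℝ} (hr : 0 < r) (ha : 0 ≤ a) :
    expMeasure r (Ici a) = ENNReal.ofReal (exp (-(r * a))) := by
  have := isProbabilityMeasure_expMeasure hr
  have hIoi : expMeasure r (Ici a) = expMeasure r (Ioi a) :=
    measure_congr ((withDensity_absolutelyContinuous _ _).ae_eq Ioi_ae_eq_Ici).symm
  rw [hIoi, ← compl_Iic, prob_compl_eq_one_sub measurableSet_Iic, ← ofReal_cdf,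
    cdf_expMeasure_eq hr, if_pos ha, ← ENNReal.ofReal_one,
    ← ENNReal.ofReal_sub _ (sub_nonneg.2 (exp_le_one_iff.2 (by nlinarith))), sub_sub_cancel]

theorem lintegral_exp_neg_mul_expMeasure {r c : ℝ} (hr : 0 < r) (hrc : 0 < r + c) :
    ∫⁻ x, ENNReal.ofReal (exp (-(c * x))) ∂expMeasure r = ENNReal.ofReal (r / (r + c)) := by
  have hpdf : ∀ x ∈ Ici (0 : ℝ), exponentialPDF r x * ENNReal.ofReal (exp (-(c * x)))
      = ENNReal.ofReal (r * exp (-(r + c) * x)) := by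
    intro x hx
    rw [exponentialPDF_of_nonneg hx, ← ENNReal.ofReal_mul (by positivity), mul_assoc,
      ← exp_add]
    ring_nf
  have hint : IntegrableOn (fun x => r * exp (-(r + c) * x)) (Ioi 0) :=
    (exp_neg_integrableOn_Ioi 0 hrc).const_mul r
  calc ∫⁻ x, ENNReal.ofReal (exp (-(c * x))) ∂expMeasure r
      = ∫⁻ x, exponentialPDF r x * ENNReal.ofReal (exp (-(c * x))) :=
        lintegral_withDensity_eq_lintegral_mul _ (measurable_exponentialPDFReal r).ennreal_ofReal
          (by fun_prop)
    _ = ∫⁻ x in Ici 0, exponentialPDF r x * ENNReal.ofReal (exp (-(c * x))) := by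
        refine (setLIntegral_eq_of_support_subset fun x hx => ?_).symm
        by_contra hneg
        exact hx (by simp only [exponentialPDF_of_neg (not_le.mp hneg), zero_mul])
    _ = ∫⁻ x in Ioi 0, ENNReal.ofReal (r * exp (-(r + c) * x)) := by
        rw [setLIntegral_congr_fun measurableSet_Ici hpdf, setLIntegral_congr Ioi_ae_eq_Ici]
    _ = ENNReal.ofReal (r / (r + c)) := by
        rw [← ofReal_integral_eq_lintegral_ofReal hint (ae_of_all _ fun x => by positivity),
          integral_const_mul, integral_exp_mul_Ioi (by linarith) 0,
          mul_zero, exp_zero, neg_div_neg_eq, mul_one_div]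

/-- A hop with main-channel SNR `γ` and eavesdropper SNR `γE` sustains the secrecy rate `log₂ t`
at the squared channel gains `p = (|h|², |h_E|²)`. -/
def hopSecure (γ γE t : ℝ) : Set (ℝ × ℝ) := {p | t ≤ (1 + γ * p.1) / (1 + γE * p.2)}

theorem measurableSet_hopSecure (γ γE t : ℝ) : MeasurableSet (hopSecure γ γE t) :=
  measurableSet_le measurable_const (by fun_prop)

theorem preimage_hopSecure {γ γE t z : ℝ} (hγ : 0 < γ) (hγE : 0 ≤ γE) (hz : 0 ≤ z) :
    (fun x => (x, z)) ⁻¹' hopSecure γ γE t = Ici ((t * (1 + γE * z) - 1) / γ) := by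
  ext x
  have hden : 0 < 1 + γE * z := by positivity
  simp only [hopSecure, mem_preimage, mem_ofPred_eq, mem_Ici, le_div_iff₀ hden, div_le_iff₀ hγ]
  constructor <;> intro h <;> linarith

theorem prod_expMeasure_hopSecure {γ γE t : ℝ} (hγ : 0 < γ) (hγE : 0 ≤ γE) (ht : 1 ≤ t) :
    (expMeasure 1).prod (expMeasure 1) (hopSecure γ γE t)
      = ENNReal.ofReal (exp (-((t - 1) / γ)) * (1 + t / γ * γE)⁻¹) := by
  have := isProbabilityMeasure_expMeasure one_pos
  rw [Measure.prod_apply_symm (measurableSet_hopSecure γ γE t)]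
  calc ∫⁻ z, expMeasure 1 ((fun x => (x, z)) ⁻¹' hopSecure γ γE t) ∂expMeasure 1
      = ∫⁻ z, ENNReal.ofReal (exp (-((t - 1) / γ))) * ENNReal.ofReal (exp (-(t * γE / γ * z)))
          ∂expMeasure 1 := by
        refine lintegral_congr_ae ?_
        filter_upwards [ae_nonneg_expMeasure 1] with z hz
        have hthr : 0 ≤ (t * (1 + γE * z) - 1) / γ := by
          apply div_nonneg _ hγ.le
          nlinarith [mul_nonneg hγE hz]
        rw [preimage_hopSecure hγ hγE hz, expMeasure_Ici one_pos hthr,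
          ← ENNReal.ofReal_mul (exp_pos _).le, ← exp_add]
        congr 2
        field_simp
        ring
    _ = ENNReal.ofReal (exp (-((t - 1) / γ)) * (1 + t / γ * γE)⁻¹) := by
        rw [lintegral_const_mul _ (by fun_prop),
          lintegral_exp_neg_mul_expMeasure one_pos (by positivity), ← ENNReal.ofReal_mul (exp_pos _).le]
        congr 2
        field_simp

theorem case3_SOP (γR γD γE R : ℝ) (hγR : 0 < γR) (hγD : 0 < γD) (hγE : 0 < γE)
    (hR : 0 < R) :
    ((expMeasure 1).prod ((expMeasure 1).prod ((expMeasure 1).prod (expMeasure 1))))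
      {p : ℝ × ℝ × ℝ × ℝ |
        (1 + γR * p.1) / (1 + γE * p.2.2.1) < (2 : ℝ) ^ R ∨
        (1 + γD * p.2.1) / (1 + γE * p.2.2.2) < (2 : ℝ) ^ R}
      = ENNReal.ofReal
        (1 - Real.exp (-((2 : ℝ) ^ R - 1) / γD - ((2 : ℝ) ^ R - 1) / γR) *
          (1 + ((2 : ℝ) ^ R / γD) * γE)⁻¹ * (1 + ((2 : ℝ) ^ R / γR) * γE)⁻¹) := by
  have := isProbabilityMeasure_expMeasure one_pos
  set t : ℝ := (2 : ℝ) ^ R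
  have ht : 1 ≤ t := one_le_rpow one_le_two hR.le
  have hmeas (γ : ℝ) := measurableSet_hopSecure γ γE t
  have hevent : {p : ℝ × ℝ × ℝ × ℝ |
      (1 + γR * p.1) / (1 + γE * p.2.2.1) < t ∨ (1 + γD * p.2.1) / (1 + γE * p.2.2.2) < t}
      = {p | (p.1, p.2.2.1) ∈ hopSecure γR γE t ∧ (p.2.1, p.2.2.2) ∈ hopSecure γD γE t}ᶜ := by
    ext p
    simp only [hopSecure, mem_compl_iff, mem_ofPred_eq, not_and_or, not_le]
  have hsecure : MeasurableSet {p : ℝ × ℝ × ℝ × ℝ |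
      (p.1, p.2.2.1) ∈ hopSecure γR γE t ∧ (p.2.1, p.2.2.2) ∈ hopSecure γD γE t} :=
    ((hmeas γR).preimage (by fun_prop)).inter ((hmeas γD).preimage (by fun_prop))
  rw [hevent, prob_compl_eq_one_sub hsecure,
    prod_prod_prod_apply_pairs _ _ _ _ (hmeas γR) (hmeas γD),
    prod_expMeasure_hopSecure hγR hγE.le ht, prod_expMeasure_hopSecure hγD hγE.le ht,
    ← ENNReal.ofReal_mul (by positivity), ← ENNReal.ofReal_one,
    ← ENNReal.ofReal_sub _ (by positivity)]
  congr 2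
  rw [show -(t - 1) / γD - (t - 1) / γR = -((t - 1) / γD) + -((t - 1) / γR) by ring, exp_add]
  ring
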